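/- Let A, B be n×n positive definite Hermitian matrices and C an n×n complex matrix with A - C B^{-1} C* positive semidefinite. Then for any positive definite Hermitian Ω, Re tr(Ω C) ≤ tr((B^{1/2} Ω A Ω B^{1/2})^{1/2}). -/

import Mathlib

open Matrix
open scoped ComplexOrder

/-- The positive semidefinite square root of a positive semidefinite matrix
(the definition `Matrix.PosSemidef.sqrt` of the older Mathlib, since removed). -/
noncomputable def Matrix.PosSemidef.sqrt {n : Type*} [Fintype n] [DecidableEq n]
    {𝕜 : Type*} [RCLike 𝕜] {A : Matrix n n 𝕜} (hA : A.PosSemidef) : Matrix n n 𝕜 :=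
  hA.1.eigenvectorUnitary.1 * diagonal ((↑) ∘ (√·) ∘ hA.1.eigenvalues) *
  (star hA.1.eigenvectorUnitary : Matrix n n 𝕜)

/-!
Put `W = B^{1/2}`, `M = W Ω A Ω W`, `S = M^{1/2}` and `Y = W Ω C W⁻¹`. Then `tr Y = tr (Ω C)`,
and the Schur condition says `S² - Y Y* = W Ω (A - C B⁻¹ C*) Ω W ≥ 0`. For `S > 0` this forces
`Re tr Y ≤ tr S`, since `2 S - S⁻¹ Y S - Y* = S⁻¹ ((Y - S)(Y - S)* + (S² - Y Y*))` is a product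
of two positive semidefinite matrices and so has nonnegative trace.
-/

namespace Matrix

variable {n 𝕜 : Type*} [Fintype n] [DecidableEq n] [RCLike 𝕜]

namespace PosSemidef

variable {A : Matrix n n 𝕜}

lemma sqrt_mul_self (hA : A.PosSemidef) : hA.sqrt * hA.sqrt = A := by
  set U : Matrix n n 𝕜 := (hA.1.eigenvectorUnitary : Matrix n n 𝕜)
  set D : Matrix n n 𝕜 := diagonal ((↑) ∘ (√·) ∘ hA.1.eigenvalues)
  have hUU : star U * U = 1 := Unitary.coe_star_mul_self _
  have hDD : D * D = diagonal (RCLike.ofReal ∘ hA.1.eigenvalues) := by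
    rw [diagonal_mul_diagonal]
    congr 1 with i
    simp [← RCLike.ofReal_mul, Real.mul_self_sqrt (hA.eigenvalues_nonneg i)]
  conv_rhs => rw [hA.1.spectral_theorem, Unitary.conjStarAlgAut_apply]
  calc hA.sqrt * hA.sqrt = U * D * (star U * U) * D * star U := by
        simp only [sqrt, U, D, Matrix.mul_assoc]
    _ = U * (D * D) * star U := by rw [hUU, Matrix.mul_one, Matrix.mul_assoc U]
    _ = _ := by rw [hDD]

lemma posSemidef_sqrt (hA : A.PosSemidef) : hA.sqrt.PosSemidef := by
  rw [sqrt, star_eq_conjTranspose]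
  refine PosSemidef.mul_mul_conjTranspose_same ?_ _
  rw [posSemidef_diagonal_iff]
  intro i
  simp [Real.sqrt_nonneg]

lemma trace_mul_nonneg (hA : A.PosSemidef) {B : Matrix n n 𝕜} (hB : B.PosSemidef) :
    0 ≤ (A * B).trace := by
  have hsqrt := hB.mul_mul_conjTranspose_same hA.sqrt
  rw [hA.posSemidef_sqrt.1.eq] at hsqrt
  rw [← hA.sqrt_mul_self, trace_mul_cycle, trace_mul_cycle]
  exact hsqrt.trace_nonneg

end PosSemidef

lemma PosDef.posDef_sqrt {A : Matrix n n 𝕜} (hA : A.PosDef) : hA.posSemidef.sqrt.PosDef := by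
  rw [hA.posSemidef.posSemidef_sqrt.posDef_iff_det_ne_zero]
  intro h
  have := congrArg det hA.posSemidef.sqrt_mul_self
  rw [det_mul, h, zero_mul] at this
  exact hA.det_pos.ne this

lemma re_trace_le_of_posSemidef_sub {S : Matrix n n 𝕜} (hS : S.PosDef) (Y : Matrix n n 𝕜)
    (hY : (S * S - Y * Yᴴ).PosSemidef) : RCLike.re Y.trace ≤ RCLike.re S.trace := by
  have key :
      S⁻¹ * ((Y - S) * (Y - S)ᴴ + (S * S - Y * Yᴴ)) = 2 • S - S⁻¹ * Y * S - Yᴴ := by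
    rw [conjTranspose_sub, hS.1.eq]
    calc _ = S⁻¹ * S * (2 • S - Yᴴ) - S⁻¹ * Y * S := by noncomm_ring
      _ = _ := by
        rw [nonsing_inv_mul S ((isUnit_iff_isUnit_det S).mp hS.isUnit), Matrix.one_mul]
        abel
  have hnonneg := hS.inv.posSemidef.trace_mul_nonneg
    ((posSemidef_self_mul_conjTranspose (Y - S)).add hY)
  rw [key, trace_sub, trace_sub, trace_smul, trace_conj' hS.isUnit, trace_conjTranspose] at hnonneg
  have hre := (RCLike.nonneg_iff.mp hnonneg).1
  simp only [nsmul_eq_mul, Nat.cast_ofNat, RCLike.star_def, map_sub, RCLike.mul_re,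
    RCLike.ofNat_re, RCLike.ofNat_im, zero_mul, sub_zero, RCLike.conj_re] at hre
  linarith

lemma re_trace_mul_le_re_trace_sqrt {A B C Ω W : Matrix n n 𝕜} (hA : A.PosDef) (hΩ : Ω.PosDef)
    (hW : W.PosDef) (hWW : W * W = B) (hSchur : (A - C * B⁻¹ * Cᴴ).PosSemidef)
    (hS : (W * Ω * A * Ω * W).PosSemidef) :
    RCLike.re (Ω * C).trace ≤ RCLike.re hS.sqrt.trace := by
  have hWΩ : IsUnit (W * Ω) := hW.isUnit.mul hΩ.isUnit
  have hM : (W * Ω * A * Ω * W).PosDef := by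
    convert (IsUnit.posDef_star_right_conjugate_iff hWΩ).mpr hA using 1
    rw [star_eq_conjTranspose, conjTranspose_mul, hW.1.eq, hΩ.1.eq, Matrix.mul_assoc _ Ω W]
  have hgap : hS.sqrt * hS.sqrt - (W * Ω * C * W⁻¹) * (W * Ω * C * W⁻¹)ᴴ
      = (W * Ω) * (A - C * B⁻¹ * Cᴴ) * (W * Ω)ᴴ := by
    have hBinv : B⁻¹ = W⁻¹ * W⁻¹ := by rw [← hWW, Matrix.mul_inv_rev]
    simp only [hS.sqrt_mul_self, hBinv, conjTranspose_mul, conjTranspose_nonsing_inv, hW.1.eq,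
      hΩ.1.eq]
    noncomm_ring
  rw [← trace_conj hW.isUnit, ← Matrix.mul_assoc]
  exact re_trace_le_of_posSemidef_sub hM.posDef_sqrt _
    (hgap ▸ hSchur.mul_mul_conjTranspose_same (W * Ω))

end Matrix

theorem weighted_cross_trace_bound (n : ℕ)
    (A B C Ω : Matrix (Fin n) (Fin n) ℂ)
    (hA : A.PosDef) (hB : B.PosDef) (hΩ : Ω.PosDef)
    (hSchur : (A - C * B⁻¹ * Cᴴ).PosSemidef)
    (hS : (hB.posSemidef.sqrt * Ω * A * Ω * hB.posSemidef.sqrt).PosSemidef) :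
    (Ω * C).trace.re ≤ hS.sqrt.trace.re :=
  re_trace_mul_le_re_trace_sqrt hA hΩ hB.posDef_sqrt hB.posSemidef.sqrt_mul_self hSchur hS
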